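/- For a finite canonical ensemble with m ≥ 1 microstates and energies E : Fin m → ℝ, let Z(β) = Σ_i exp(−β E_i) and define the thermal entropy S(β) = ln Z(β) − β · (d/dβ) ln Z(β). Then for every β ∈ ℝ, S is differentiable at β with S'(β) = − β · σ(β), where σ(β) = Σ_i P_i(β) E_i² − (Σ_i P_i(β) E_i)² is the energy fluctuation; in particular S'(β) ≤ 0 whenever β ≥ 0, so the entropy is nonincreasing in the inverse temperature. -/

import Mathlib

/-!
Since `(log Z)' = -⟨E⟩`, the entropy is `S = log Z + β ⟨E⟩`, so the two `⟨E⟩` terms cancel on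
differentiating and `S' = β ⟨E⟩'`. Differentiating a Boltzmann average gives minus a covariance,
`⟨f⟩' = ⟨E⟩⟨f⟩ - ⟨E f⟩`, hence `⟨E⟩' = -σ`; and `σ ≥ 0` is Jensen's inequality for `x ↦ x²`.
-/

open Real Finset

namespace CanonicalEnsemble

variable {ι : Type*} [Fintype ι] (E : ι → ℝ)

noncomputable def partitionFunction (b : ℝ) : ℝ := ∑ i, exp (-b * E i)

noncomputable def prob (b : ℝ) (i : ι) : ℝ := exp (-b * E i) / partitionFunction E b

noncomputable def mean (b : ℝ) (f : ι → ℝ) : ℝ := ∑ i, prob E b i * f i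

noncomputable def fluctuation (b : ℝ) : ℝ := mean E b (fun i => E i ^ 2) - mean E b E ^ 2

noncomputable def entropy (b : ℝ) : ℝ :=
  log (partitionFunction E b) - b * deriv (fun b' => log (partitionFunction E b')) b

theorem partitionFunction_pos [Nonempty ι] (b : ℝ) : 0 < partitionFunction E b :=
  sum_pos (fun _ _ => exp_pos _) univ_nonempty

theorem prob_nonneg (b : ℝ) (i : ι) : 0 ≤ prob E b i :=
  div_nonneg (exp_pos _).le (sum_nonneg fun _ _ => (exp_pos _).le)

theorem sum_prob_eq_one [Nonempty ι] (b : ℝ) : ∑ i, prob E b i = 1 := by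
  simp only [prob, ← sum_div]
  exact div_self (partitionFunction_pos E b).ne'

theorem mean_eq_div (b : ℝ) (f : ι → ℝ) :
    mean E b f = (∑ i, exp (-b * E i) * f i) / partitionFunction E b := by
  rw [mean, sum_div]
  exact sum_congr rfl fun i _ => by rw [prob]; ring

theorem hasDerivAt_sum_exp_mul (f : ι → ℝ) (b : ℝ) :
    HasDerivAt (fun b => ∑ i, exp (-b * E i) * f i) (-∑ i, exp (-b * E i) * (E i * f i)) b := by
  rw [← sum_neg_distrib]
  refine HasDerivAt.fun_sum fun i _ => ?_
  have hexp : HasDerivAt (fun b => exp (-b * E i)) (exp (-b * E i) * -E i) b :=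
    ((hasDerivAt_neg b).mul_const (E i)).exp.congr_deriv (by ring)
  exact (hexp.mul_const (f i)).congr_deriv (by ring)

theorem hasDerivAt_partitionFunction (b : ℝ) :
    HasDerivAt (partitionFunction E) (-∑ i, exp (-b * E i) * E i) b := by
  have h := hasDerivAt_sum_exp_mul E (fun _ => 1) b
  simp only [mul_one] at h
  exact h

theorem hasDerivAt_log_partitionFunction [Nonempty ι] (b : ℝ) :
    HasDerivAt (fun b => log (partitionFunction E b)) (-mean E b E) b := by
  rw [mean_eq_div, ← neg_div]
  exact (hasDerivAt_partitionFunction E b).log (partitionFunction_pos E b).ne'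

theorem hasDerivAt_mean [Nonempty ι] (f : ι → ℝ) (b : ℝ) :
    HasDerivAt (fun b => mean E b f)
      (mean E b E * mean E b f - mean E b (fun i => E i * f i)) b := by
  have hZ := (partitionFunction_pos E b).ne'
  simp only [mean_eq_div]
  refine ((hasDerivAt_sum_exp_mul E f b).fun_div
    (hasDerivAt_partitionFunction E b) hZ).congr_deriv ?_
  field_simp
  ring

theorem hasDerivAt_mean_energy [Nonempty ι] (b : ℝ) :
    HasDerivAt (fun b => mean E b E) (-fluctuation E b) b := by
  refine (hasDerivAt_mean E E b).congr_deriv ?_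
  simp only [fluctuation, ← sq]
  ring

theorem fluctuation_nonneg [Nonempty ι] (b : ℝ) : 0 ≤ fluctuation E b := by
  have jensen := (even_two.convexOn_pow (𝕜 := ℝ)).map_sum_le (t := univ) (p := E)
    (fun i _ => prob_nonneg E b i) (sum_prob_eq_one E b) (fun i _ => Set.mem_univ (E i))
  simp only [smul_eq_mul] at jensen
  exact sub_nonneg.mpr jensen

theorem entropy_eq [Nonempty ι] :
    entropy E = fun b => log (partitionFunction E b) + b * mean E b E := by
  funext b
  rw [entropy, (hasDerivAt_log_partitionFunction E b).deriv]
  ring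

theorem hasDerivAt_entropy [Nonempty ι] (b : ℝ) :
    HasDerivAt (entropy E) (-(b * fluctuation E b)) b := by
  rw [entropy_eq]
  exact ((hasDerivAt_log_partitionFunction E b).fun_add
    ((hasDerivAt_id' b).fun_mul (hasDerivAt_mean_energy E b))).congr_deriv (by ring)

end CanonicalEnsemble

open CanonicalEnsemble in
/-- For a finite canonical ensemble, the thermal entropy
`S(β) = ln Z(β) − β ∂_β ln Z(β)` is differentiable with `S'(β) = −β σ(β)`,
where `σ(β)` is the energy fluctuation; in particular `S'(β) ≤ 0` for `β ≥ 0`. -/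
theorem entropy_deriv_eq_neg_beta_fluctuation
    (m : ℕ) (hm : 1 ≤ m) (E : Fin m → ℝ) (β : ℝ) :
    HasDerivAt
      (fun b : ℝ => Real.log (∑ i, Real.exp (-b * E i))
        - b * deriv (fun b' : ℝ => Real.log (∑ i, Real.exp (-b' * E i))) b)
      (-(β * ((∑ i, (Real.exp (-β * E i) / ∑ j, Real.exp (-β * E j)) * E i ^ 2)
        - (∑ i, (Real.exp (-β * E i) / ∑ j, Real.exp (-β * E j)) * E i) ^ 2))) β ∧
    (0 ≤ β →
      -(β * ((∑ i, (Real.exp (-β * E i) / ∑ j, Real.exp (-β * E j)) * E i ^ 2)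
        - (∑ i, (Real.exp (-β * E i) / ∑ j, Real.exp (-β * E j)) * E i) ^ 2)) ≤ 0) := by
  have : Nonempty (Fin m) := Fin.pos_iff_nonempty.mp hm
  exact ⟨hasDerivAt_entropy E β,
    fun hβ => neg_nonpos.mpr (mul_nonneg hβ (fluctuation_nonneg E β))⟩
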